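/- Let X be a centered real random variable such that for every integer k ≥ 2, E[|X|^k] ≤ (2σ̃²)^{k/2} · (k/2) · Γ(k/2) for some σ̃ > 0. Then for all t ∈ ℝ, E[exp(t X)] ≤ exp(4 σ̃² t²). -/

import Mathlib

open MeasureTheory
open scoped ProbabilityTheory

-- exp x ≤ 1 + x + x^2 for |x| ≤ 1
lemma exp_le_quadratic {x : ℝ} (hx : |x| ≤ 1) : Real.exp x ≤ 1 + x + x^2 := by
  have h := Real.exp_bound hx (n := 3) (by norm_num)
  have hsum : ∑ m ∈ Finset.range 3, x ^ m / m.factorial = 1 + x + x^2/2 := by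
    norm_num [Finset.sum_range_succ, Nat.factorial]
  rw [hsum] at h
  have h1 := (abs_sub_le_iff.1 h).1
  have hcube : |x|^3 ≤ x^2 := by
    calc |x|^3 = |x| * |x|^2 := by ring
    _ ≤ 1 * |x|^2 := by nlinarith [abs_nonneg x]
    _ = x^2 := by rw [one_mul, sq_abs]
  have hc : (((3:ℕ).succ : ℝ) / (((3:ℕ).factorial : ℝ) * ((3:ℕ):ℝ))) = 2/9 := by
    norm_num [Nat.factorial]
  rw [hc] at h1
  nlinarith [hcube]

lemma exp_le_self_add_exp_sq (x : ℝ) : Real.exp x ≤ x + Real.exp (x^2) := by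
  rcases le_or_gt (|x|) 1 with h | h
  · have h1 := exp_le_quadratic h
    have h2 : 1 + x^2 ≤ Real.exp (x^2) := by
      linarith [Real.add_one_le_exp (x^2)]
    linarith
  · rcases le_or_gt 0 x with hx | hx
    · have : x ≤ x^2 := by nlinarith [abs_of_nonneg hx]
      calc Real.exp x ≤ Real.exp (x^2) := Real.exp_le_exp.2 this
      _ ≤ x + Real.exp (x^2) := by linarith
    · have h1 : Real.exp x ≤ 1 := Real.exp_le_one_iff.mpr hx.le
      have h2 : 1 + x^2 ≤ Real.exp (x^2) := by linarith [Real.add_one_le_exp (x^2)]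
      have h3 : -x ≤ x^2 := by nlinarith [abs_of_neg hx]
      linarith

lemma exp_sq_integral_bound {Ω : Type*} [MeasureSpace Ω] [IsProbabilityMeasure (ℙ : Measure Ω)]
    (X : Ω → ℝ) (hX : Measurable X) (σ : ℝ) (hσ : 0 < σ)
    (hmomint : ∀ k : ℕ, Integrable (fun ω => |X ω|^k) ℙ)
    (hmom : ∀ k : ℕ, 2 ≤ k →
      ∫ ω, |X ω|^k ≤ (2 * σ^2) ^ ((k:ℝ)/2) * ((k:ℝ)/2) * Real.Gamma ((k:ℝ)/2))
    (c : ℝ) (hc : 0 ≤ c) (hr : 2*c*σ^2 < 1) :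
    Integrable (fun ω => Real.exp (c * X ω ^ 2)) ℙ ∧
      ∫ ω, Real.exp (c * X ω ^ 2) ≤ (1 - 2*c*σ^2)⁻¹ := by
  set r : ℝ := 2*c*σ^2 with hrdef
  have hr0 : 0 ≤ r := by positivity
  -- even moment bound
  have hmom2 : ∀ m : ℕ, 1 ≤ m → ∫ ω, |X ω|^(2*m) ≤ (2*σ^2)^m * m.factorial := by
    intro m hm
    have h := hmom (2*m) (by omega)
    have hcast : (((2*m : ℕ):ℝ))/2 = (m:ℝ) := by push_cast; ring
    rw [hcast] at h
    have hrpow : ((2*σ^2) : ℝ) ^ ((m:ℝ)) = (2*σ^2)^m := Real.rpow_natCast _ m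
    rw [hrpow] at h
    have hgam : (m:ℝ) * Real.Gamma (m:ℝ) = (m.factorial : ℝ) := by
      obtain ⟨n, rfl⟩ : ∃ n, m = n+1 := ⟨m-1, by omega⟩
      have g1 : Real.Gamma ((n:ℝ)+1) = n.factorial := Real.Gamma_nat_eq_factorial n
      push_cast
      rw [g1]
      rw [Nat.factorial_succ]
      push_cast
      ring
    calc ∫ ω, |X ω|^(2*m) ≤ (2*σ^2)^m * (m:ℝ) * Real.Gamma (m:ℝ) := h
      _ = (2*σ^2)^m * ((m:ℝ) * Real.Gamma (m:ℝ)) := by ring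
      _ = (2*σ^2)^m * m.factorial := by rw [hgam]
  -- term rewriting
  have heq : ∀ (m : ℕ) (ω : Ω), (c * X ω^2)^m / m.factorial
      = (c^m / m.factorial) * |X ω|^(2*m) := by
    intro m ω
    rw [mul_pow, pow_mul, sq_abs]
    ring
  have hint_m : ∀ m : ℕ, Integrable (fun ω => (c * X ω^2)^m / m.factorial) ℙ := by
    intro m
    have : (fun ω => (c * X ω^2)^m / m.factorial)
        = fun ω => (c^m / m.factorial) * |X ω|^(2*m) := funext (heq m)
    rw [this]
    exact (hmomint (2*m)).const_mul _
  have hterm : ∀ m : ℕ, ∫ ω, (c * X ω^2)^m / m.factorial ≤ r^m := by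
    intro m
    rcases Nat.eq_zero_or_pos m with h0 | hpos
    · subst h0; simp
    · have hfac : (0:ℝ) < m.factorial := by exact_mod_cast m.factorial_pos
      calc ∫ ω, (c * X ω^2)^m / m.factorial
          = ∫ ω, (c^m / m.factorial) * |X ω|^(2*m) := by
            exact integral_congr_ae (Filter.Eventually.of_forall (heq m))
        _ = (c^m / m.factorial) * ∫ ω, |X ω|^(2*m) := integral_const_mul _ _
        _ ≤ (c^m / m.factorial) * ((2*σ^2)^m * m.factorial) := by
            apply mul_le_mul_of_nonneg_left (hmom2 m hpos)
            positivity
        _ = (c * (2*σ^2))^m := by field_simp [mul_pow]; ring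
        _ = r^m := by rw [hrdef]; ring_nf
  -- pointwise nonneg & summability
  have hnn : ∀ (ω : Ω) (m : ℕ), 0 ≤ (c * X ω^2)^m / m.factorial := by
    intro ω m; positivity
  have hsumm : ∀ ω : Ω, Summable (fun m => (c * X ω^2)^m / m.factorial) := by
    intro ω
    exact Real.summable_pow_div_factorial _
  have hpt : ∀ ω : Ω, Real.exp (c * X ω^2) = ∑' m, (c * X ω^2)^m / (m.factorial : ℝ) := by
    intro ω
    rw [Real.exp_eq_exp_ℝ, NormedSpace.exp_eq_tsum_div]
  -- measurability
  have hmeas : Measurable fun ω => Real.exp (c * X ω^2) :=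
    (((hX.pow_const 2).const_mul c)).exp
  have hmeas_m : ∀ m : ℕ, Measurable fun ω => (c * X ω^2)^m / (m.factorial : ℝ) := by
    intro m
    exact (((hX.pow_const 2).const_mul c).pow_const m).div_const _
  have hgeo : Summable (fun m : ℕ => r^m) := summable_geometric_of_lt_one hr0 hr
  have hlint : ∫⁻ ω, ENNReal.ofReal (Real.exp (c * X ω^2)) ∂ℙ ≤ ENNReal.ofReal ((1-r)⁻¹) := by
    calc ∫⁻ ω, ENNReal.ofReal (Real.exp (c * X ω^2)) ∂ℙ
        = ∫⁻ ω, ∑' m, ENNReal.ofReal ((c * X ω^2)^m / m.factorial) ∂ℙ := by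
          apply lintegral_congr
          intro ω
          rw [hpt ω, ENNReal.ofReal_tsum_of_nonneg (hnn ω) (hsumm ω)]
      _ = ∑' m, ∫⁻ ω, ENNReal.ofReal ((c * X ω^2)^m / m.factorial) ∂ℙ :=
          lintegral_tsum fun m => (ENNReal.measurable_ofReal.comp (hmeas_m m)).aemeasurable
      _ = ∑' m, ENNReal.ofReal (∫ ω, (c * X ω^2)^m / m.factorial ∂ℙ) :=
          tsum_congr fun m => (ofReal_integral_eq_lintegral_ofReal (hint_m m)
            (Filter.Eventually.of_forall fun ω => hnn ω m)).symm
      _ ≤ ∑' m, ENNReal.ofReal (r^m) :=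
          ENNReal.tsum_le_tsum fun m => ENNReal.ofReal_le_ofReal (hterm m)
      _ = ENNReal.ofReal (∑' m, r^m) :=
          (ENNReal.ofReal_tsum_of_nonneg (fun m => pow_nonneg hr0 m) hgeo).symm
      _ = ENNReal.ofReal ((1-r)⁻¹) := by rw [tsum_geometric_of_lt_one hr0 hr]
  have hint : Integrable (fun ω => Real.exp (c * X ω^2)) ℙ := by
    refine ⟨hmeas.aestronglyMeasurable, ?_⟩
    rw [hasFiniteIntegral_iff_ofReal (Filter.Eventually.of_forall fun ω => (Real.exp_pos _).le)]
    exact lt_of_le_of_lt hlint ENNReal.ofReal_lt_top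
  refine ⟨hint, ?_⟩
  have hofr := ofReal_integral_eq_lintegral_ofReal hint
    (Filter.Eventually.of_forall fun ω => (Real.exp_pos _).le)
  rw [← hofr] at hlint
  have h1r : (0:ℝ) ≤ (1-r)⁻¹ := by
    apply inv_nonneg.2; linarith
  exact (ENNReal.ofReal_le_ofReal_iff h1r).1 hlint

/-- A centered random variable whose absolute moments satisfy
`E[|X|^k] ≤ (2σ̃²)^{k/2} (k/2) Γ(k/2)` for all integers `k ≥ 2` has MGF bounded by
`E[exp(tX)] ≤ exp(4 σ̃² t²)` for all real `t`. -/
theorem moments_to_mgf {Ω : Type*} [MeasureSpace Ω] [IsProbabilityMeasure (ℙ : Measure Ω)]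
    (X : Ω → ℝ) (hX : Measurable X) (hXint : Integrable X ℙ) (hcent : ∫ ω, X ω = 0)
    (σ : ℝ) (hσ : 0 < σ)
    (hmomint : ∀ k : ℕ, Integrable (fun ω => |X ω|^k) ℙ)
    (hmom : ∀ k : ℕ, 2 ≤ k →
      ∫ ω, |X ω|^k ≤ (2 * σ^2) ^ ((k:ℝ)/2) * ((k:ℝ)/2) * Real.Gamma ((k:ℝ)/2))
    (hexpint : ∀ t : ℝ, Integrable (fun ω => Real.exp (t * X ω)) ℙ) :
    ∀ t : ℝ, ∫ ω, Real.exp (t * X ω) ≤ Real.exp (4 * σ^2 * t^2) := by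
  intro t
  rcases le_or_gt (σ^2 * t^2) (1/4) with hsmall | hbig
  · -- small t: use exp x ≤ x + exp (x²)
    set c : ℝ := t^2 with hcdef
    have hc : 0 ≤ c := sq_nonneg t
    have hrlt : 2*c*σ^2 < 1 := by nlinarith
    obtain ⟨hint2, hbd⟩ := exp_sq_integral_bound X hX σ hσ hmomint hmom c hc hrlt
    have hptw : ∀ ω, Real.exp (t * X ω) ≤ t * X ω + Real.exp (c * X ω ^ 2) := by
      intro ω
      have h := exp_le_self_add_exp_sq (t * X ω)
      have : (t * X ω)^2 = c * X ω ^ 2 := by rw [hcdef]; ring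
      rwa [this] at h
    have hintr : Integrable (fun ω => t * X ω + Real.exp (c * X ω ^ 2)) ℙ :=
      (hXint.const_mul t).add hint2
    have hstep : ∫ ω, Real.exp (t * X ω) ≤ ∫ ω, (t * X ω + Real.exp (c * X ω ^ 2)) :=
      integral_mono (hexpint t) hintr (fun ω => hptw ω)
    have hsplit : ∫ ω, (t * X ω + Real.exp (c * X ω ^ 2))
        = t * (∫ ω, X ω) + ∫ ω, Real.exp (c * X ω ^ 2) := by
      rw [integral_add (hXint.const_mul t) hint2, integral_const_mul]
    rw [hsplit, hcent, mul_zero, zero_add] at hstep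
    have hr0 : (0:ℝ) ≤ 2*c*σ^2 := by positivity
    have hfin : (1 - 2*c*σ^2)⁻¹ ≤ Real.exp (4 * σ^2 * t^2) := by
      have hexp := Real.add_one_le_exp (2*(2*c*σ^2))
      have hpos : (0:ℝ) < 1 - 2*c*σ^2 := by linarith
      rw [inv_le_iff_one_le_mul₀ hpos]
      have h2 : Real.exp (4 * σ^2 * t^2) = Real.exp (2*(2*c*σ^2)) := by
        congr 1; rw [hcdef]; ring
      rw [h2]
      nlinarith [hexp, hr0, hsmall, Real.exp_pos (2*(2*c*σ^2))]
    linarith [hbd, hstep, hfin]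
  · -- large t: use t x ≤ σ² t² + x²/(4σ²)
    set c : ℝ := (4*σ^2)⁻¹ with hcdef
    have hc : 0 ≤ c := by positivity
    have h4 : 4*σ^2 * c = 1 := by rw [hcdef]; field_simp
    have hrhalf : 2*c*σ^2 = 1/2 := by rw [hcdef]; field_simp; ring
    have hrlt : 2*c*σ^2 < 1 := by rw [hrhalf]; norm_num
    obtain ⟨hint2, hbd⟩ := exp_sq_integral_bound X hX σ hσ hmomint hmom c hc hrlt
    rw [hrhalf] at hbd
    norm_num at hbd
    have hkey : ∀ x : ℝ, t*x ≤ σ^2*t^2 + c*x^2 := by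
      intro x
      have h4σ : (0:ℝ) < 4*σ^2 := by positivity
      rw [← mul_le_mul_iff_of_pos_left h4σ]
      calc 4*σ^2*(t*x) ≤ 4*σ^2*(σ^2*t^2) + x^2 := by nlinarith [sq_nonneg (2*σ^2*t - x)]
        _ = 4*σ^2*(σ^2*t^2) + (4*σ^2*c)*x^2 := by rw [h4]; ring
        _ = 4*σ^2*(σ^2*t^2+c*x^2) := by ring
    have hptw : ∀ ω, Real.exp (t * X ω) ≤ Real.exp (σ^2*t^2) * Real.exp (c * X ω ^ 2) := by
      intro ω
      rw [← Real.exp_add]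
      exact Real.exp_le_exp.2 (hkey (X ω))
    have hstep : ∫ ω, Real.exp (t * X ω)
        ≤ ∫ ω, Real.exp (σ^2*t^2) * Real.exp (c * X ω ^ 2) :=
      integral_mono (hexpint t) (hint2.const_mul _) (fun ω => hptw ω)
    rw [integral_const_mul] at hstep
    have h2le : (2:ℝ) ≤ Real.exp (3*σ^2*t^2) := by
      have hq := Real.quadratic_le_exp_of_nonneg (x := 3*σ^2*t^2) (by positivity)
      nlinarith [hbig, sq_nonneg (σ*t), sq_nonneg (3*σ^2*t^2 - 3/4)]
    calc ∫ ω, Real.exp (t * X ω)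
        ≤ Real.exp (σ^2*t^2) * ∫ ω, Real.exp (c * X ω ^ 2) := hstep
      _ ≤ Real.exp (σ^2*t^2) * 2 := by
          apply mul_le_mul_of_nonneg_left hbd (Real.exp_pos _).le
      _ ≤ Real.exp (σ^2*t^2) * Real.exp (3*σ^2*t^2) := by
          apply mul_le_mul_of_nonneg_left h2le (Real.exp_pos _).le
      _ = Real.exp (4 * σ^2 * t^2) := by rw [← Real.exp_add]; ring_nf
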